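/- If 𝒯 admits fair valuations for binary sets, then 𝒯 is identified. -/

import Mathlib

/-! On `𝒯`, fair valuations for binary sets say that the pointwise maximum (and hence minimum) of
two linear functions `t ↦ a ⬝ᵥ t` is again linear, so these functions form a sublattice of
`C(𝒯, ℝ)`. Since `𝒯` lies in the simplex they contain the constants and separate points, so by the
lattice Stone–Weierstrass theorem they are dense. The integral of a linear function against an
information structure `π` is determined by `p_π`, hence so is the integral of every continuous
function, and a finite Borel measure is determined by those integrals. -/

open MeasureTheory Set

section Defs

variable {Θ : Type*} [Fintype Θ]

/-- The value function `v_A(s) = max_{a ∈ A} ∑_θ a(θ) s(θ)`. -/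
noncomputable def valueFn (A : Set (Θ → ℝ)) (s : Θ → ℝ) : ℝ :=
  sSup ((fun a => ∑ θ, a θ * s θ) '' A)

/-- A binary set: one or two elements. -/
def Binary (A : Set (Θ → ℝ)) : Prop := A.ncard = 1 ∨ A.ncard = 2

/-- An information structure on `S`: a Borel probability measure supported on `S`. -/
def IsInfoStructure (S : Set (Θ → ℝ)) (π : Measure (Θ → ℝ)) : Prop :=
  IsProbabilityMeasure π ∧ π Sᶜ = 0

/-- The skill distribution `p_π(θ) = ∫_S s(θ) dπ(s)` induced by `π`. -/
noncomputable def skillDist (S : Set (Θ → ℝ)) (π : Measure (Θ → ℝ)) : Θ → ℝ :=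
  fun θ => ∫ s in S, s θ ∂π

/-- `S` is non-discriminatory. -/
def NonDiscriminatory (S : Set (Θ → ℝ)) : Prop :=
  ∀ π π' : Measure (Θ → ℝ), IsInfoStructure S π → IsInfoStructure S π' →
    ∀ A : Set (Θ → ℝ), A.Finite → A.Nonempty →
      skillDist S π = skillDist S π' →
      ∫ t in S, valueFn A t ∂π = ∫ t in S, valueFn A t ∂π'

/-- `S` is non-discriminatory for binary sets. -/
def NonDiscriminatoryBinary (S : Set (Θ → ℝ)) : Prop :=
  ∀ π π' : Measure (Θ → ℝ), IsInfoStructure S π → IsInfoStructure S π' →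
    ∀ A : Set (Θ → ℝ), Binary A →
      skillDist S π = skillDist S π' →
      ∫ t in S, valueFn A t ∂π = ∫ t in S, valueFn A t ∂π'

/-- `S` is identified. -/
def Identified (S : Set (Θ → ℝ)) : Prop :=
  ∀ π π' : Measure (Θ → ℝ), IsInfoStructure S π → IsInfoStructure S π' →
    skillDist S π = skillDist S π' → π = π'

/-- `S` admits fair valuations. -/
def FairValuations (S : Set (Θ → ℝ)) : Prop :=
  ∀ A : Set (Θ → ℝ), A.Finite → A.Nonempty →
    ∃ α : Θ → ℝ, ∀ t ∈ S, valueFn A t = ∑ θ, α θ * t θ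

/-- `S` admits fair valuations for binary sets. -/
def FairValuationsBinary (S : Set (Θ → ℝ)) : Prop :=
  ∀ A : Set (Θ → ℝ), Binary A →
    ∃ α : Θ → ℝ, ∀ t ∈ S, valueFn A t = ∑ θ, α θ * t θ

/-- `W_A(p)`: value of optimal information design with skill distribution `p`,
over information structures on `S`. -/
noncomputable def Wfn (A S : Set (Θ → ℝ)) (p : Θ → ℝ) : ℝ :=
  sSup {x | ∃ π : Measure (Θ → ℝ), IsInfoStructure S π ∧ skillDist S π = p ∧
    x = ∫ t in S, valueFn A t ∂π}

/-- A function is affine on `T`. -/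
def AffineOnSet (W : (Θ → ℝ) → ℝ) (T : Set (Θ → ℝ)) : Prop :=
  ∀ p ∈ T, ∀ q ∈ T, ∀ γ : ℝ, 0 ≤ γ → γ ≤ 1 →
    W (γ • p + (1 - γ) • q) = γ * W p + (1 - γ) * W q

end Defs

lemma binary_pair {Θ : Type*} (a b : Θ → ℝ) : Binary ({a, b} : Set (Θ → ℝ)) := by
  rcases eq_or_ne a b with rfl | hab
  · exact Or.inl (by simp)
  · exact Or.inr (Set.ncard_pair hab)

lemma IsInfoStructure.restrict_eq {Θ : Type*} {S : Set (Θ → ℝ)} {π : Measure (Θ → ℝ)}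
    (h : IsInfoStructure S π) : π.restrict S = π :=
  Measure.restrict_eq_self_of_ae_mem (ae_iff.mpr h.2)

section

variable {Θ : Type*} [Fintype Θ]

lemma valueFn_pair (a b s : Θ → ℝ) : valueFn {a, b} s = max (a ⬝ᵥ s) (b ⬝ᵥ s) := by
  rw [valueFn, Set.image_pair, csSup_pair]
  rfl

namespace FairValuationsBinary

variable {S : Set (Θ → ℝ)}

lemma exists_max_eq (hfv : FairValuationsBinary S) (a b : Θ → ℝ) :
    ∃ γ : Θ → ℝ, ∀ t ∈ S, max (a ⬝ᵥ t) (b ⬝ᵥ t) = γ ⬝ᵥ t := by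
  obtain ⟨γ, hγ⟩ := hfv {a, b} (binary_pair a b)
  exact ⟨γ, fun t ht => (valueFn_pair a b t).symm.trans (hγ t ht)⟩

lemma exists_min_eq (hfv : FairValuationsBinary S) (a b : Θ → ℝ) :
    ∃ γ : Θ → ℝ, ∀ t ∈ S, min (a ⬝ᵥ t) (b ⬝ᵥ t) = γ ⬝ᵥ t := by
  obtain ⟨γ, hγ⟩ := hfv.exists_max_eq (-a) (-b)
  refine ⟨-γ, fun t ht => ?_⟩
  rw [neg_dotProduct, ← hγ t ht, neg_dotProduct, neg_dotProduct, max_neg_neg, neg_neg]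

end FairValuationsBinary

def dotProductOn (S : Set (Θ → ℝ)) (α : Θ → ℝ) : C(S, ℝ) :=
  ⟨fun t => α ⬝ᵥ (t : Θ → ℝ), by fun_prop⟩

lemma exists_dotProduct_eq_of_sum_eq_one {x y : Θ → ℝ} (hx : ∑ θ, x θ = 1) (hy : ∑ θ, y θ = 1)
    (hxy : x ≠ y) (v w : ℝ) : ∃ α : Θ → ℝ, α ⬝ᵥ x = v ∧ α ⬝ᵥ y = w := by
  classical
  obtain ⟨θ₀, hθ₀⟩ := Function.ne_iff.mp hxy
  set c := (v - w) / (x θ₀ - y θ₀)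
  set d := v - c * x θ₀
  have hα : ∀ z : Θ → ℝ, (c • Pi.single θ₀ 1 + d • 1) ⬝ᵥ z = c * z θ₀ + d * ∑ θ, z θ := by
    intro z
    rw [add_dotProduct, smul_dotProduct, smul_dotProduct, single_dotProduct, one_dotProduct,
      one_mul, smul_eq_mul, smul_eq_mul]
  refine ⟨c • Pi.single θ₀ 1 + d • 1, ?_, ?_⟩
  · rw [hα, hx]; ring
  · have hc : c * (x θ₀ - y θ₀) = v - w := div_mul_cancel₀ _ (sub_ne_zero.mpr hθ₀)
    rw [hα, hy]
    linear_combination -hc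

theorem FairValuationsBinary.closure_range_dotProductOn {S : Set (Θ → ℝ)} [CompactSpace S]
    (hsum : ∀ t ∈ S, ∑ θ, t θ = 1) (hfv : FairValuationsBinary S) :
    closure (Set.range (dotProductOn S)) = ⊤ := by
  apply ContinuousMap.sublattice_closure_eq_top
  · exact Set.range_nonempty _
  · rintro _ ⟨a, rfl⟩ _ ⟨b, rfl⟩
    obtain ⟨γ, hγ⟩ := hfv.exists_min_eq a b
    exact ⟨γ, ContinuousMap.ext fun t => (hγ t t.2).symm⟩
  · rintro _ ⟨a, rfl⟩ _ ⟨b, rfl⟩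
    obtain ⟨γ, hγ⟩ := hfv.exists_max_eq a b
    exact ⟨γ, ContinuousMap.ext fun t => (hγ t t.2).symm⟩
  · intro v x y
    rcases eq_or_ne x y with rfl | hxy
    · refine ⟨dotProductOn S (v x • 1), ⟨_, rfl⟩, ?_, ?_⟩ <;>
        simp [dotProductOn, smul_dotProduct, one_dotProduct, hsum x x.2]
    · obtain ⟨α, hαx, hαy⟩ := exists_dotProduct_eq_of_sum_eq_one (hsum x x.2) (hsum y y.2)
        (Subtype.coe_ne_coe.mpr hxy) (v x) (v y)
      exact ⟨dotProductOn S α, ⟨α, rfl⟩, hαx, hαy⟩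

lemma exists_dotProduct_dist_lt {S : Set (Θ → ℝ)} [CompactSpace S]
    (hsum : ∀ t ∈ S, ∑ θ, t θ = 1) (hfv : FairValuationsBinary S) (g : C(S, ℝ)) {ε : ℝ}
    (hε : 0 < ε) : ∃ α : Θ → ℝ, ∀ t : S, dist (g t) (α ⬝ᵥ (t : Θ → ℝ)) < ε := by
  have hg : g ∈ closure (Set.range (dotProductOn S)) := by
    rw [hfv.closure_range_dotProductOn hsum]
    trivial
  obtain ⟨_, ⟨α, rfl⟩, hα⟩ := Metric.mem_closure_iff.mp hg ε hε
  exact ⟨α, fun t => (ContinuousMap.dist_apply_le_dist t).trans_lt hα⟩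

lemma setIntegral_dotProduct {S : Set (Θ → ℝ)} (hS : IsCompact S) (μ : Measure (Θ → ℝ))
    [IsFiniteMeasure μ] (α : Θ → ℝ) : ∫ t in S, α ⬝ᵥ t ∂μ = α ⬝ᵥ skillDist S μ := by
  have hint (θ : Θ) : IntegrableOn (fun t : Θ → ℝ => t θ) S μ :=
    (continuous_apply θ).continuousOn.integrableOn_compact hS
  simp only [dotProduct, skillDist]
  rw [integral_finsetSum _ fun θ _ => (hint θ).const_mul (α θ)]
  exact Finset.sum_congr rfl fun θ _ => integral_const_mul _ _

lemma dist_setIntegral_dotProduct_le {S : Set (Θ → ℝ)} (hS : IsCompact S)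
    (μ : Measure (Θ → ℝ)) [IsProbabilityMeasure μ] {g : (Θ → ℝ) → ℝ} (hg : ContinuousOn g S)
    {α : Θ → ℝ} {ε : ℝ} (hε : 0 ≤ ε) (hα : ∀ t ∈ S, dist (g t) (α ⬝ᵥ t) ≤ ε) :
    dist (∫ t in S, g t ∂μ) (α ⬝ᵥ skillDist S μ) ≤ ε := by
  have hαint : IntegrableOn (fun t : Θ → ℝ => α ⬝ᵥ t) S μ :=
    (by fun_prop : Continuous fun t : Θ → ℝ => α ⬝ᵥ t).continuousOn.integrableOn_compact hS
  rw [← setIntegral_dotProduct hS μ α, dist_eq_norm,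
    ← integral_sub (hg.integrableOn_compact hS) hαint]
  calc _ ≤ ε * μ.real S :=
        norm_setIntegral_le_of_norm_le_const (measure_lt_top μ S) fun t ht =>
          dist_eq_norm (g t) _ ▸ hα t ht
    _ ≤ ε := mul_le_of_le_one_right hε measureReal_le_one

theorem FairValuationsBinary.setIntegral_eq_of_skillDist_eq {S : Set (Θ → ℝ)} (hS : IsCompact S)
    (hsum : ∀ t ∈ S, ∑ θ, t θ = 1) (hfv : FairValuationsBinary S) {μ ν : Measure (Θ → ℝ)}
    [IsProbabilityMeasure μ] [IsProbabilityMeasure ν] (hp : skillDist S μ = skillDist S ν)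
    {g : (Θ → ℝ) → ℝ} (hg : ContinuousOn g S) : ∫ t in S, g t ∂μ = ∫ t in S, g t ∂ν := by
  have : CompactSpace S := isCompact_iff_compactSpace.mp hS
  refine eq_of_forall_dist_le fun ε hε => ?_
  obtain ⟨α, hα⟩ :=
    exists_dotProduct_dist_lt hsum hfv ⟨S.domRestrict g, hg.domRestrict⟩ (half_pos hε)
  have hαS : ∀ t ∈ S, dist (g t) (α ⬝ᵥ t) ≤ ε / 2 := fun t ht => (hα ⟨t, ht⟩).le
  calc dist (∫ t in S, g t ∂μ) (∫ t in S, g t ∂ν)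
      ≤ dist (∫ t in S, g t ∂μ) (α ⬝ᵥ skillDist S μ)
        + dist (∫ t in S, g t ∂ν) (α ⬝ᵥ skillDist S ν) := by
        rw [hp]
        exact dist_triangle_right _ _ _
    _ ≤ ε / 2 + ε / 2 :=
        add_le_add (dist_setIntegral_dotProduct_le hS μ hg (half_pos hε).le hαS)
          (dist_setIntegral_dotProduct_le hS ν hg (half_pos hε).le hαS)
    _ = ε := add_halves ε

end

variable {Θ : Type*} [Fintype Θ] [Nonempty Θ]

theorem stmt6 (𝒯 : Set (Θ → ℝ)) (h𝒯 : 𝒯 ⊆ stdSimplex ℝ Θ) (h𝒯c : IsClosed 𝒯)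
    (hfv : FairValuationsBinary 𝒯) : Identified 𝒯 := by
  intro π π' hπ hπ' hp
  have := hπ.1
  have := hπ'.1
  have hcompact : IsCompact 𝒯 := (isCompact_stdSimplex ℝ Θ).of_isClosed_subset h𝒯c h𝒯
  refine ext_of_forall_integral_eq_of_IsFiniteMeasure fun f => ?_
  rw [← hπ.restrict_eq, ← hπ'.restrict_eq]
  exact hfv.setIntegral_eq_of_skillDist_eq hcompact (fun t ht => (h𝒯 ht).2) hp
    f.continuous.continuousOn
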